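/- Let β : ℝ² → ℝ be smooth, positive, and satisfy the Tzitzeica equation (ln β)_xy = β² + c/β for a constant c. Define V = β_xx/β - (1/2)(β_x/β)² and W = β_yy/β - (1/2)(β_y/β)². Then (β, β, V, W) satisfies the stationary mVN system: β_yyy - 2β_y W - β W_y = β_xxx - 2β_x V - β V_x, W_x = (3/2)(β²)_y, and V_y = (3/2)(β²)_x. -/

import Mathlib

/-- Partial derivative in the first variable. -/
noncomputable def pdx {E : Type*} [NormedAddCommGroup E] [NormedSpace ℝ E]
    (f : ℝ → ℝ → E) : ℝ → ℝ → E := fun x y => deriv (fun t => f t y) x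

/-- Partial derivative in the second variable. -/
noncomputable def pdy {E : Type*} [NormedAddCommGroup E] [NormedSpace ℝ E]
    (f : ℝ → ℝ → E) : ℝ → ℝ → E := fun x y => deriv (fun t => f x t) y

open Function

section helpers
variable {f : ℝ → ℝ → ℝ}

lemma contDiff_slice_x (hf : ContDiff ℝ (⊤ : ℕ∞) (uncurry f)) (y : ℝ) :
    ContDiff ℝ (⊤ : ℕ∞) (fun t => f t y) :=
  hf.comp (contDiff_id.prodMk contDiff_const)

lemma contDiff_slice_y (hf : ContDiff ℝ (⊤ : ℕ∞) (uncurry f)) (x : ℝ) :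
    ContDiff ℝ (⊤ : ℕ∞) (fun t => f x t) :=
  hf.comp (contDiff_const.prodMk contDiff_id)

lemma hasDerivAt_pdx (hf : ContDiff ℝ (⊤ : ℕ∞) (uncurry f)) (x y : ℝ) :
    HasDerivAt (fun t => f t y) (pdx f x y) x :=
  ((contDiff_slice_x hf y).differentiable (by simp) x).hasDerivAt

lemma hasDerivAt_pdy (hf : ContDiff ℝ (⊤ : ℕ∞) (uncurry f)) (x y : ℝ) :
    HasDerivAt (fun t => f x t) (pdy f x y) y :=
  ((contDiff_slice_y hf x).differentiable (by simp) y).hasDerivAt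

lemma uncurry_pdx (hf : ContDiff ℝ (⊤ : ℕ∞) (uncurry f)) :
    uncurry (pdx f) = fun p : ℝ × ℝ => fderiv ℝ (uncurry f) p (1, 0) := by
  funext p
  obtain ⟨x, y⟩ := p
  have hF : HasFDerivAt (uncurry f) (fderiv ℝ (uncurry f) (x, y)) (x, y) :=
    (hf.differentiable (by simp) (x, y)).hasFDerivAt
  have hin : HasDerivAt (fun t : ℝ => (t, y)) ((1 : ℝ), (0 : ℝ)) x :=
    HasDerivAt.prodMk (hasDerivAt_id x) (hasDerivAt_const x y)
  have := hF.comp_hasDerivAt x hin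
  exact this.deriv

lemma uncurry_pdy (hf : ContDiff ℝ (⊤ : ℕ∞) (uncurry f)) :
    uncurry (pdy f) = fun p : ℝ × ℝ => fderiv ℝ (uncurry f) p (0, 1) := by
  funext p
  obtain ⟨x, y⟩ := p
  have hF : HasFDerivAt (uncurry f) (fderiv ℝ (uncurry f) (x, y)) (x, y) :=
    (hf.differentiable (by simp) (x, y)).hasFDerivAt
  have hin : HasDerivAt (fun t : ℝ => (x, t)) ((0 : ℝ), (1 : ℝ)) y :=
    HasDerivAt.prodMk (hasDerivAt_const y x) (hasDerivAt_id y)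
  have := hF.comp_hasDerivAt y hin
  exact this.deriv

lemma contDiff_pdx (hf : ContDiff ℝ (⊤ : ℕ∞) (uncurry f)) :
    ContDiff ℝ (⊤ : ℕ∞) (uncurry (pdx f)) := by
  rw [uncurry_pdx hf]
  exact (hf.fderiv_right (by simp)).clm_apply contDiff_const

lemma contDiff_pdy (hf : ContDiff ℝ (⊤ : ℕ∞) (uncurry f)) :
    ContDiff ℝ (⊤ : ℕ∞) (uncurry (pdy f)) := by
  rw [uncurry_pdy hf]
  exact (hf.fderiv_right (by simp)).clm_apply contDiff_const

lemma pdx_pdy_comm (hf : ContDiff ℝ (⊤ : ℕ∞) (uncurry f)) (x y : ℝ) :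
    pdx (pdy f) x y = pdy (pdx f) x y := by
  set F := uncurry f with hFdef
  have hD : ContDiff ℝ (⊤ : ℕ∞) (fderiv ℝ F) := hf.fderiv_right (by simp)
  have h1 : ∀ p, HasFDerivAt F (fderiv ℝ F p) p :=
    fun p => (hf.differentiable (by simp) p).hasFDerivAt
  have h2 : HasFDerivAt (fderiv ℝ F) (fderiv ℝ (fderiv ℝ F) (x, y)) (x, y) :=
    (hD.differentiable (by simp) (x, y)).hasFDerivAt
  have hsymm := second_derivative_symmetric h1 h2 ((1 : ℝ), (0 : ℝ)) ((0 : ℝ), (1 : ℝ))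
  have e1 : pdx (pdy f) x y = fderiv ℝ (fderiv ℝ F) (x, y) ((1 : ℝ), (0 : ℝ)) ((0 : ℝ), (1 : ℝ)) := by
    have hin : HasDerivAt (fun t : ℝ => (t, y)) ((1 : ℝ), (0 : ℝ)) x :=
      HasDerivAt.prodMk (hasDerivAt_id x) (hasDerivAt_const x y)
    have hc : HasDerivAt (fun t : ℝ => fderiv ℝ F (t, y))
        (fderiv ℝ (fderiv ℝ F) (x, y) ((1 : ℝ), (0 : ℝ))) x := h2.comp_hasDerivAt x hin
    have hval := hc.clm_apply (hasDerivAt_const x ((0 : ℝ), (1 : ℝ)))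
    simp only [map_zero, add_zero] at hval
    have efun : (fun t : ℝ => pdy f t y) = fun t : ℝ => fderiv ℝ F (t, y) ((0 : ℝ), (1 : ℝ)) := by
      funext t
      exact congrFun (uncurry_pdy hf) (t, y)
    show deriv (fun t : ℝ => pdy f t y) x = _
    rw [efun]
    exact hval.deriv
  have e2 : pdy (pdx f) x y = fderiv ℝ (fderiv ℝ F) (x, y) ((0 : ℝ), (1 : ℝ)) ((1 : ℝ), (0 : ℝ)) := by
    have hin : HasDerivAt (fun t : ℝ => (x, t)) ((0 : ℝ), (1 : ℝ)) y :=
      HasDerivAt.prodMk (hasDerivAt_const y x) (hasDerivAt_id y)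
    have hc : HasDerivAt (fun t : ℝ => fderiv ℝ F (x, t))
        (fderiv ℝ (fderiv ℝ F) (x, y) ((0 : ℝ), (1 : ℝ))) y := h2.comp_hasDerivAt y hin
    have hval := hc.clm_apply (hasDerivAt_const y ((1 : ℝ), (0 : ℝ)))
    simp only [map_zero, add_zero] at hval
    have efun : (fun t : ℝ => pdx f x t) = fun t : ℝ => fderiv ℝ F (x, t) ((1 : ℝ), (0 : ℝ)) := by
      funext t
      exact congrFun (uncurry_pdx hf) (x, t)
    show deriv (fun t : ℝ => pdx f x t) y = _
    rw [efun]
    exact hval.deriv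
  rw [e1, e2, hsymm]

end helpers

/-- Swap the two arguments. -/
def flip2 (f : ℝ → ℝ → ℝ) : ℝ → ℝ → ℝ := fun x y => f y x

lemma contDiff_flip2 {f : ℝ → ℝ → ℝ} (hf : ContDiff ℝ (⊤ : ℕ∞) (uncurry f)) :
    ContDiff ℝ (⊤ : ℕ∞) (uncurry (flip2 f)) :=
  hf.comp (contDiff_snd.prodMk contDiff_fst)

lemma pdx_flip2 (f : ℝ → ℝ → ℝ) (x y : ℝ) : pdx (flip2 f) x y = pdy f y x := rfl
lemma pdy_flip2 (f : ℝ → ℝ → ℝ) (x y : ℝ) : pdy (flip2 f) x y = pdx f y x := rfl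

/-- The quantity `W` built from a function. -/
noncomputable def Wd (β : ℝ → ℝ → ℝ) : ℝ → ℝ → ℝ := fun x y =>
  pdy (pdy β) x y / β x y - (1/2) * (pdy β x y / β x y)^2

lemma pdy_sq {β : ℝ → ℝ → ℝ} (hβ : ContDiff ℝ (⊤ : ℕ∞) (uncurry β)) (x y : ℝ) :
    pdy (fun x y => (β x y)^2) x y = 2 * β x y * pdy β x y := by
  have h := ((hasDerivAt_pdy hβ x y).pow 2).deriv
  show deriv (fun t => (β x t)^2) y = _
  rw [show (fun t => (β x t)^2) = (fun t => β x t) ^ 2 from rfl, h]; norm_num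

lemma pdx_sq {β : ℝ → ℝ → ℝ} (hβ : ContDiff ℝ (⊤ : ℕ∞) (uncurry β)) (x y : ℝ) :
    pdx (fun x y => (β x y)^2) x y = 2 * β x y * pdx β x y := by
  have h := ((hasDerivAt_pdx hβ x y).pow 2).deriv
  show deriv (fun t => (β t y)^2) x = _
  rw [show (fun t => (β t y)^2) = (fun t => β t y) ^ 2 from rfl, h]; norm_num

lemma keyW {β : ℝ → ℝ → ℝ} (hβ : ContDiff ℝ (⊤ : ℕ∞) (uncurry β)) (hpos : ∀ x y, 0 < β x y)
    (x y : ℝ) :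
    pdy (pdy (pdy β)) x y - 2 * pdy β x y * Wd β x y - β x y * pdy (Wd β) x y = 0 := by
  have hne : ∀ x y, β x y ≠ 0 := fun x y => (hpos x y).ne'
  have h3 : HasDerivAt (fun t => β x t) (pdy β x y) y := hasDerivAt_pdy hβ x y
  have h2 : HasDerivAt (fun t => pdy β x t) (pdy (pdy β) x y) y :=
    hasDerivAt_pdy (contDiff_pdy hβ) x y
  have h1 : HasDerivAt (fun t => pdy (pdy β) x t) (pdy (pdy (pdy β)) x y) y :=
    hasDerivAt_pdy (contDiff_pdy (contDiff_pdy hβ)) x y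
  have hq := h1.div h3 (hne x y)
  have hr := h2.div h3 (hne x y)
  have hW : HasDerivAt (fun t => Wd β x t)
      ((pdy (pdy (pdy β)) x y * β x y - pdy (pdy β) x y * pdy β x y) / β x y ^ 2 -
        (1/2) * (2 * (pdy β x y / β x y) ^ 1 *
          ((pdy (pdy β) x y * β x y - pdy β x y * pdy β x y) / β x y ^ 2))) y := by
    simpa [Wd, Pi.div_def, Pi.sub_def] using hq.sub ((hr.pow 2).const_mul (1/2 : ℝ))
  have e : pdy (Wd β) x y = _ := hW.deriv
  rw [e]
  simp only [Wd, pow_one]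
  have hb := hne x y
  field_simp
  ring

lemma keyT {β : ℝ → ℝ → ℝ} {c : ℝ} (hβ : ContDiff ℝ (⊤ : ℕ∞) (uncurry β))
    (hpos : ∀ x y, 0 < β x y)
    (htz : ∀ x y, pdy (pdx (fun x y => Real.log (β x y))) x y = (β x y)^2 + c / β x y)
    (x y : ℝ) :
    pdx (Wd β) x y = 3 * β x y * pdy β x y := by
  have hne : ∀ x y, β x y ≠ 0 := fun x y => (hpos x y).ne'
  set u : ℝ → ℝ → ℝ := fun x y => Real.log (β x y) with hu_def
  have hu : ContDiff ℝ (⊤ : ℕ∞) (uncurry u) := by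
    rw [contDiff_iff_contDiffAt]
    intro p
    exact (Real.contDiffAt_log.2 (hne p.1 p.2)).comp p hβ.contDiffAt
  -- pdy u = pdy β / β
  have huy : ∀ x y, pdy u x y = pdy β x y / β x y := fun x y =>
    ((hasDerivAt_pdy hβ x y).log (hne x y)).deriv
  -- pdy (pdy u) = B/b - A²/b²  pointwise
  have huyy : ∀ x y, pdy (pdy u) x y =
      (pdy (pdy β) x y * β x y - pdy β x y * pdy β x y) / β x y ^ 2 := by
    intro x y
    have hfun : (fun t => pdy u x t) = fun t => pdy β x t / β x t := funext fun t => huy x t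
    have h := (hasDerivAt_pdy (contDiff_pdy hβ) x y).div (hasDerivAt_pdy hβ x y) (hne x y)
    show deriv (fun t => pdy u x t) y = _
    rw [hfun]
    exact h.deriv
  -- Wd β = pdy (pdy u) + (1/2) (pdy u)²
  have hWu : Wd β = fun x y => pdy (pdy u) x y + (1/2) * (pdy u x y)^2 := by
    funext x y
    rw [Wd, huyy, huy]
    have hb := hne x y
    field_simp
    ring
  -- the function (x,y) ↦ β² + c/β and its y-derivative
  have hFy : ∀ x y, pdy (fun x y => (β x y)^2 + c / β x y) x y =
      2 * β x y * pdy β x y - c * pdy β x y / β x y ^ 2 := by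
    intro x y
    have h := ((hasDerivAt_pdy hβ x y).pow 2).add
      ((hasDerivAt_const y c).div (hasDerivAt_pdy hβ x y) (hne x y))
    have e : pdy (fun x y => (β x y)^2 + c / β x y) x y = _ := h.deriv
    rw [e]
    have hb := hne x y
    field_simp
    ring
  -- pdx (pdy u) = β² + c/β  pointwise (Clairaut + htz)
  have hxy : ∀ x y, pdx (pdy u) x y = (β x y)^2 + c / β x y := fun a b => by
    rw [pdx_pdy_comm hu a b]; exact htz a b
  -- pdx (pdy (pdy u)) = pdy (β² + c/β)
  have hxyy : ∀ x y, pdx (pdy (pdy u)) x y =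
      2 * β x y * pdy β x y - c * pdy β x y / β x y ^ 2 := by
    intro x y
    rw [pdx_pdy_comm (contDiff_pdy hu) x y]
    have hfun : (fun t => pdx (pdy u) x t) = fun t => (β x t)^2 + c / β x t :=
      funext fun t => hxy x t
    show deriv (fun t => pdx (pdy u) x t) y = _
    rw [hfun]
    exact (hFy x y).symm ▸ rfl
  -- differentiate Wd in x
  have h1 : HasDerivAt (fun t => pdy (pdy u) t y) (pdx (pdy (pdy u)) x y) x :=
    hasDerivAt_pdx (contDiff_pdy (contDiff_pdy hu)) x y
  have h2 : HasDerivAt (fun t => pdy u t y) (pdx (pdy u) x y) x :=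
    hasDerivAt_pdx (contDiff_pdy hu) x y
  have hW : HasDerivAt (fun t => Wd β t y)
      (pdx (pdy (pdy u)) x y + (1/2) * (2 * (pdy u x y) ^ 1 * pdx (pdy u) x y)) x := by
    rw [hWu]
    exact h1.add ((h2.pow 2).const_mul (1/2 : ℝ))
  have e : pdx (Wd β) x y = _ := hW.deriv
  rw [e, hxyy, hxy, huy]
  have hb := hne x y
  field_simp
  ring

theorem tzitzeica_solves_smVN
    (β V W : ℝ → ℝ → ℝ) (c : ℝ)
    (hβ : ContDiff ℝ (⊤ : ℕ∞) (Function.uncurry β)) (hβpos : ∀ x y, β x y > 0)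
    (htz : ∀ x y, pdy (pdx (fun x y => Real.log (β x y))) x y = (β x y)^2 + c / β x y)
    (hV : ∀ x y, V x y = pdx (pdx β) x y / β x y - (1/2) * (pdx β x y / β x y)^2)
    (hW : ∀ x y, W x y = pdy (pdy β) x y / β x y - (1/2) * (pdy β x y / β x y)^2) :
    (∀ x y, pdy (pdy (pdy β)) x y - 2 * pdy β x y * W x y - β x y * pdy W x y
        = pdx (pdx (pdx β)) x y - 2 * pdx β x y * V x y - β x y * pdx V x y) ∧
    (∀ x y, pdx W x y = (3/2) * pdy (fun x y => (β x y)^2) x y) ∧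
    (∀ x y, pdy V x y = (3/2) * pdx (fun x y => (β x y)^2) x y) := by
  have hne : ∀ x y, β x y ≠ 0 := fun x y => (hβpos x y).ne'
  have hβ' : ContDiff ℝ (⊤ : ℕ∞) (uncurry (flip2 β)) := contDiff_flip2 hβ
  have hpos' : ∀ x y, 0 < flip2 β x y := fun a b => hβpos b a
  have hWf : W = Wd β := funext fun x => funext fun y => (hW x y).trans rfl
  have hVf : V = flip2 (Wd (flip2 β)) := funext fun x => funext fun y => (hV x y).trans rfl
  have hu : ContDiff ℝ (⊤ : ℕ∞) (uncurry (fun x y => Real.log (β x y))) := by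
    rw [contDiff_iff_contDiffAt]
    intro p
    exact (Real.contDiffAt_log.2 (hne p.1 p.2)).comp p hβ.contDiffAt
  have htz' : ∀ a b, pdy (pdx (fun x y => Real.log (flip2 β x y))) a b
      = (flip2 β a b)^2 + c / flip2 β a b := by
    intro a b
    show pdx (pdy (fun x y => Real.log (β x y))) b a = (β b a)^2 + c / β b a
    rw [pdx_pdy_comm hu b a]
    exact htz b a
  refine ⟨?_, ?_, ?_⟩
  · intro x y
    have hy := keyW hβ hβpos x y
    have hx' : pdx (pdx (pdx β)) x y - 2 * pdx β x y * flip2 (Wd (flip2 β)) x y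
        - β x y * pdx (flip2 (Wd (flip2 β))) x y = 0 := keyW hβ' hpos' y x
    rw [hWf, hVf]
    linarith
  · intro x y
    rw [hWf, keyT hβ hβpos htz x y, pdy_sq hβ x y]
    ring
  · intro x y
    have h : pdy (flip2 (Wd (flip2 β))) x y = 3 * β x y * pdx β x y :=
      keyT hβ' hpos' htz' y x
    rw [hVf, h, pdx_sq hβ x y]
    ring
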